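/- For all x ≥ 0, h₂(x) ≥ h₅(x) ≥ h₄(x), where h₂(x) = (1+x)log(1+x) − x, h₄(x) = (x/2)·arcsinh(x/2), and h₅(x) = x·arcsinh(x/2) − 2(cosh(arcsinh(x/2)) − 1). -/

import Mathlib

noncomputable def h₂ (x : ℝ) : ℝ := (1 + x) * Real.log (1 + x) - x
noncomputable def h₄ (x : ℝ) : ℝ := (x / 2) * Real.arsinh (x / 2)
noncomputable def h₅ (x : ℝ) : ℝ :=
  x * Real.arsinh (x / 2) - 2 * (Real.cosh (Real.arsinh (x / 2)) - 1)

/-!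
Both differences vanish at `0`, so it suffices that they are nondecreasing on `[0, ∞)`.
Since `(h₅)' x = arsinh (x / 2)` and `(h₂)' x = log (1 + x)`, the first inequality reduces to
`x / 2 + √(1 + (x / 2)²) ≤ 1 + x`. With `t = x / 2`, the derivative of `h₅ - h₄` is
`(arsinh t - t / √(1 + t²)) / 2`; substituting `t = sinh u`, its sign is that of
`u cosh u - sinh u`, which is nondecreasing in `u` because its derivative is `u sinh u`.
-/

open Real Set

theorem monotoneOn_Ici_of_hasDerivAt_of_nonneg {f f' : ℝ → ℝ} {a : ℝ}
    (hf : ∀ x ∈ Ici a, HasDerivAt f (f' x) x) (hf' : ∀ x ∈ Ioi a, 0 ≤ f' x) :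
    MonotoneOn f (Ici a) :=
  monotoneOn_of_hasDerivWithinAt_nonneg (convex_Ici a)
    (fun x hx => (hf x hx).continuousAt.continuousWithinAt)
    (fun x hx => (hf x (interior_subset hx)).hasDerivWithinAt)
    (by rwa [interior_Ici])

theorem Real.sinh_le_mul_cosh {u : ℝ} (hu : 0 ≤ u) : sinh u ≤ u * cosh u := by
  have hderiv : ∀ v ∈ Ici (0 : ℝ), HasDerivAt (fun v => v * cosh v - sinh v) (v * sinh v) v :=
    fun v _ => (((hasDerivAt_id' v).mul (hasDerivAt_cosh v)).sub (hasDerivAt_sinh v)).congr_deriv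
      (by ring)
  have := monotoneOn_Ici_of_hasDerivAt_of_nonneg hderiv
    (fun v hv => mul_nonneg hv.le (sinh_nonneg_iff.2 hv.le)) self_mem_Ici hu hu
  simp only [zero_mul, sinh_zero, sub_zero] at this
  linarith

theorem Real.div_sqrt_one_add_sq_le_arsinh {t : ℝ} (ht : 0 ≤ t) : t / √(1 + t ^ 2) ≤ arsinh t := by
  rw [← cosh_arsinh, div_le_iff₀ (cosh_pos _)]
  simpa only [sinh_arsinh] using sinh_le_mul_cosh (arsinh_nonneg_iff.2 ht)

theorem Real.arsinh_half_le_log_one_add {x : ℝ} (hx : 0 ≤ x) : arsinh (x / 2) ≤ log (1 + x) := by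
  rw [arsinh]
  apply log_le_log (by positivity)
  have : √(1 + (x / 2) ^ 2) ≤ 1 + x / 2 :=
    sqrt_le_iff.2 ⟨by positivity, by nlinarith⟩
  linarith

theorem hasDerivAt_h₂ {x : ℝ} (hx : -1 < x) : HasDerivAt h₂ (log (1 + x)) x := by
  have h := ((hasDerivAt_mul_log (by linarith : 1 + x ≠ 0)).comp x
    ((hasDerivAt_id' x).const_add 1)).sub (hasDerivAt_id' x)
  exact h.congr_deriv (by ring)

theorem hasDerivAt_h₅ (x : ℝ) : HasDerivAt h₅ (arsinh (x / 2)) x := by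
  have hhalf : HasDerivAt (fun x : ℝ => x / 2) (1 / 2) x := (hasDerivAt_id' x).div_const 2
  have harsinh := (hasDerivAt_arsinh (x / 2)).comp x hhalf
  have h := ((hasDerivAt_id' x).mul harsinh).sub
    ((((hasDerivAt_cosh _).comp x harsinh).sub_const 1).const_mul 2)
  refine h.congr_deriv ?_
  simp only [Function.comp_apply, sinh_arsinh]
  ring

theorem hasDerivAt_h₄ (x : ℝ) :
    HasDerivAt h₄ ((arsinh (x / 2) + x / 2 / √(1 + (x / 2) ^ 2)) / 2) x := by
  have hhalf : HasDerivAt (fun x : ℝ => x / 2) (1 / 2) x := (hasDerivAt_id' x).div_const 2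
  refine (hhalf.mul ((hasDerivAt_arsinh (x / 2)).comp x hhalf)).congr_deriv ?_
  simp only [Function.comp_apply]
  ring

theorem h2_ge_h5_ge_h4 (x : ℝ) (hx : 0 ≤ x) :
    h₂ x ≥ h₅ x ∧ h₅ x ≥ h₄ x := by
  have h₂_sub_h₅ : MonotoneOn (fun x => h₂ x - h₅ x) (Ici 0) :=
    monotoneOn_Ici_of_hasDerivAt_of_nonneg
      (fun y hy => (hasDerivAt_h₂ (by linarith [mem_Ici.1 hy])).sub (hasDerivAt_h₅ y))
      (fun y hy => sub_nonneg.2 (arsinh_half_le_log_one_add hy.le))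
  have h₅_sub_h₄ : MonotoneOn (fun x => h₅ x - h₄ x) (Ici 0) :=
    monotoneOn_Ici_of_hasDerivAt_of_nonneg (fun y _ => (hasDerivAt_h₅ y).sub (hasDerivAt_h₄ y))
      (fun y hy => by
        linarith [div_sqrt_one_add_sq_le_arsinh (by linarith [mem_Ioi.1 hy] : 0 ≤ y / 2)])
  have h₀ : h₂ 0 = 0 ∧ h₄ 0 = 0 ∧ h₅ 0 = 0 := by simp [h₂, h₄, h₅]
  have h₂₅ := h₂_sub_h₅ self_mem_Ici hx hx
  have h₅₄ := h₅_sub_h₄ self_mem_Ici hx hx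
  simp only [h₀] at h₂₅ h₅₄
  constructor <;> linarith
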